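/- arXiv:1705.10195 — 2 statements merged into one kernel-verified Lean document; each statement's English description precedes it below -/
import Mathlib

section
/- Let A be a family of subsets of [n], each of size at most p. Then there exists a subfamily Â ⊆ A that is q-representative for A and has size at most binomial(p+q, p). -/
/-!
Take a subfamily `Â` that is minimal under inclusion among the `q`-representative subfamilies
of `A`. By minimality every `S ∈ Â` has a witness `B_S`, `|B_S| ≤ q`, that `S` avoids and every
other member of `Â` meets, so the pairs `(S, B_S)` form a Bollobás set-pair system. Bollobás'
inequality `∑ᵢ 1 / C(|Aᵢ| + |Bᵢ|, |Aᵢ|) ≤ 1` then gives `|Â| ≤ C(p + q, p)`. It is proved by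
induction on the ground set `X`: for `x ∈ X`, the pairs `(Aᵢ, Bᵢ \ {x})` with `x ∉ Aᵢ` form a
system on `X \ {x}`, and summing these bounds over `x ∈ X` yields `|X|` times the original sum.
-/

/-- `Ahat` is a `q`-representative subfamily of `A` (families of subsets of `[n]` = `Fin n`):
for every `B ⊆ [n]` with `|B| ≤ q`, `A` contains a member disjoint from `B` iff `Ahat` does. -/
def IsRepFamily (n q : ℕ) (Ahat A : Finset (Finset (Fin n))) : Prop :=
  Ahat ⊆ A ∧ ∀ B : Finset (Fin n), B.card ≤ q →
    ((∃ S ∈ A, Disjoint S B) ↔ (∃ S ∈ Ahat, Disjoint S B))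

open Finset

namespace Nat

theorem add_choose_le_add_choose {a b p q : ℕ} (ha : a ≤ p) (hb : b ≤ q) :
    (a + b).choose a ≤ (p + q).choose p :=
  calc (a + b).choose a = (a + b).choose b := choose_symm_add
    _ ≤ (p + b).choose b := choose_le_choose b (by omega)
    _ = (p + b).choose p := choose_symm_add.symm
    _ ≤ (p + q).choose p := choose_le_choose p (by omega)

theorem cast_div_choose_pred_eq {a b : ℕ} (hb : 0 < b) :
    (b : ℚ) / (a + (b - 1)).choose a = (a + b : ℕ) / (a + b).choose a := by
  obtain ⟨b, rfl⟩ := exists_eq_add_one.2 hb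
  have key := choose_mul_succ_eq (a + b) a
  rw [show a + b + 1 - a = b + 1 by omega] at key
  rw [Nat.add_sub_cancel, ← add_assoc,
    div_eq_div_iff (by exact_mod_cast (choose_pos (by omega)).ne')
      (by exact_mod_cast (choose_pos (by omega)).ne')]
  exact_mod_cast (mul_comm _ _).trans (key.symm.trans (mul_comm _ _))

end Nat

section SetPairs

variable {ι α : Type*}

structure IsSetPairSystem (I : Finset ι) (A B : ι → Finset α) : Prop where
  disjoint : ∀ i ∈ I, Disjoint (A i) (B i)
  not_disjoint : ∀ i ∈ I, ∀ j ∈ I, i ≠ j → ¬ Disjoint (A i) (B j)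

variable [DecidableEq α] {I : Finset ι} {A B : ι → Finset α}

theorem IsSetPairSystem.delete (h : IsSetPairSystem I A B) (x : α) :
    IsSetPairSystem {i ∈ I | x ∉ A i} A (fun i ↦ (B i).erase x) where
  disjoint i hi := (h.disjoint i (mem_filter.1 hi).1).mono_right (erase_subset _ _)
  not_disjoint i hi j hj hij hdisj := by
    rw [mem_filter] at hi hj
    rw [← disjoint_erase_comm, erase_eq_of_notMem hi.2] at hdisj
    exact h.not_disjoint i hi.1 j hj.1 hij hdisj

theorem sum_inv_choose_card_erase {s t X : Finset α} (hst : Disjoint s t) (hX : s ∪ t ⊆ X)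
    (ht : t.Nonempty) :
    ∑ x ∈ X \ s, (((#s + #(t.erase x)).choose #s : ℕ) : ℚ)⁻¹ = #X / (#s + #t).choose #s := by
  have h_in : {x ∈ X \ s | x ∈ t} = t := by
    ext x
    simp only [mem_filter, mem_sdiff, and_iff_right_iff_imp]
    exact fun hx ↦ ⟨hX (mem_union_right _ hx), disjoint_right.1 hst hx⟩
  have h_out : #{x ∈ X \ s | x ∉ t} + #s + #t = #X := by
    have := card_filter_add_card_filter_not (s := X \ s) (· ∈ t)
    rw [h_in, card_sdiff_of_subset (subset_union_left.trans hX)] at this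
    have := card_le_card (subset_union_left.trans hX)
    omega
  have h_sum_in : ∑ x ∈ t, (((#s + #(t.erase x)).choose #s : ℕ) : ℚ)⁻¹ =
      #t * (((#s + (#t - 1)).choose #s : ℕ) : ℚ)⁻¹ := by
    rw [sum_congr rfl fun x hx ↦ by rw [card_erase_of_mem hx], sum_const, nsmul_eq_mul]
  have h_sum_out : ∑ x ∈ X \ s with x ∉ t, (((#s + #(t.erase x)).choose #s : ℕ) : ℚ)⁻¹ =
      #{x ∈ X \ s | x ∉ t} * (((#s + #t).choose #s : ℕ) : ℚ)⁻¹ := by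
    rw [sum_congr rfl fun x hx ↦ by rw [erase_eq_of_notMem (mem_filter.1 hx).2], sum_const,
      nsmul_eq_mul]
  rw [← sum_filter_add_sum_filter_not _ (· ∈ t), h_in, h_sum_in, h_sum_out, ← h_out,
    ← div_eq_mul_inv, Nat.cast_div_choose_pred_eq ht.card_pos]
  push_cast
  ring

theorem IsSetPairSystem.sum_inv_choose_le_one (h : IsSetPairSystem I A B) (X : Finset α)
    (hX : ∀ i ∈ I, A i ∪ B i ⊆ X) :
    ∑ i ∈ I, (((#(A i) + #(B i)).choose #(A i) : ℕ) : ℚ)⁻¹ ≤ 1 := by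
  induction X using Finset.strongInduction generalizing I B with
  | H X ih =>
  -- The counting identity below needs every `B i` nonempty; an empty `B i` forces `I ⊆ {i}`.
  by_cases hB : ∃ i ∈ I, B i = ∅
  · obtain ⟨i, hi, hBi⟩ := hB
    have h_eq : ∀ j ∈ I, j = i := fun j hj ↦ by_contra fun hji ↦
      h.not_disjoint j hj i hi hji (by simp [hBi])
    calc ∑ i ∈ I, (((#(A i) + #(B i)).choose #(A i) : ℕ) : ℚ)⁻¹
        ≤ ∑ i ∈ I, 1 := sum_le_sum fun _ _ ↦
          inv_le_one_of_one_le₀ (by exact_mod_cast Nat.choose_pos (Nat.le_add_right _ _))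
      _ ≤ 1 := by
        rw [sum_const, nsmul_one]
        exact_mod_cast card_le_one.2 fun j hj k hk ↦ (h_eq j hj).trans (h_eq k hk).symm
  push Not at hB
  obtain rfl | ⟨i₀, hi₀⟩ := I.eq_empty_or_nonempty
  · simp
  have hX_pos : (0 : ℚ) < #X := by
    obtain ⟨x, hx⟩ := hB i₀ hi₀
    exact_mod_cast card_pos.2 ⟨x, hX i₀ hi₀ (mem_union_right _ hx)⟩
  have h_delete : ∀ x ∈ X, ∑ i ∈ I with x ∉ A i,
      (((#(A i) + #((B i).erase x)).choose #(A i) : ℕ) : ℚ)⁻¹ ≤ 1 := fun x hx ↦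
    ih _ (erase_ssubset hx) (h.delete x) fun i hi ↦ by
      rw [mem_filter] at hi
      rw [← erase_eq_of_notMem hi.2, ← erase_union_distrib]
      exact erase_subset_erase x (hX i hi.1)
  refine le_of_mul_le_mul_left ?_ hX_pos
  calc (#X : ℚ) * ∑ i ∈ I, (((#(A i) + #(B i)).choose #(A i) : ℕ) : ℚ)⁻¹
      = ∑ i ∈ I, ∑ x ∈ X \ A i, (((#(A i) + #((B i).erase x)).choose #(A i) : ℕ) : ℚ)⁻¹ := by
        rw [mul_sum]
        refine sum_congr rfl fun i hi ↦ ?_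
        rw [sum_inv_choose_card_erase (h.disjoint i hi) (hX i hi) (hB i hi), div_eq_mul_inv]
    _ = ∑ x ∈ X, ∑ i ∈ I with x ∉ A i,
          (((#(A i) + #((B i).erase x)).choose #(A i) : ℕ) : ℚ)⁻¹ :=
        sum_comm' fun _ _ ↦ by simp only [mem_filter, mem_sdiff]; tauto
    _ ≤ ∑ x ∈ X, 1 := sum_le_sum h_delete
    _ = #X * 1 := by rw [sum_const, nsmul_eq_mul]

theorem IsSetPairSystem.card_le_choose (h : IsSetPairSystem I A B) {p q : ℕ}
    (hA : ∀ i ∈ I, #(A i) ≤ p) (hB : ∀ i ∈ I, #(B i) ≤ q) :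
    #I ≤ (p + q).choose p := by
  have h_weight : ∀ i ∈ I, (((p + q).choose p : ℕ) : ℚ)⁻¹ ≤
      (((#(A i) + #(B i)).choose #(A i) : ℕ) : ℚ)⁻¹ := fun i hi ↦
    inv_anti₀ (by exact_mod_cast Nat.choose_pos (Nat.le_add_right _ _))
      (by exact_mod_cast Nat.add_choose_le_add_choose (hA i hi) (hB i hi))
  have h_sum := (sum_le_sum h_weight).trans <| h.sum_inv_choose_le_one
    (I.biUnion fun i ↦ A i ∪ B i) fun i hi ↦ subset_biUnion_of_mem (fun i ↦ A i ∪ B i) hi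
  rw [sum_const, nsmul_eq_mul, ← div_eq_mul_inv,
    div_le_one (by exact_mod_cast Nat.choose_pos (Nat.le_add_right _ _))] at h_sum
  exact_mod_cast h_sum

end SetPairs

namespace IsRepFamily

variable {n q : ℕ} {Ahat A : Finset (Finset (Fin n))}

theorem refl (A : Finset (Finset (Fin n))) : IsRepFamily n q A A := ⟨subset_rfl, fun _ _ ↦ Iff.rfl⟩

theorem exists_witness_of_not_erase (h : IsRepFamily n q Ahat A) {S : Finset (Fin n)}
    (h_erase : ¬ IsRepFamily n q (Ahat.erase S) A) :
    ∃ B : Finset (Fin n), #B ≤ q ∧ Disjoint S B ∧ ∀ T ∈ Ahat, T ≠ S → ¬ Disjoint T B := by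
  simp only [IsRepFamily, (erase_subset S Ahat).trans h.1, true_and, not_forall] at h_erase
  obtain ⟨B, hB, h_iff⟩ := h_erase
  have h_none : ¬ ∃ T ∈ Ahat.erase S, Disjoint T B := fun ⟨T, hT, hTB⟩ ↦
    h_iff (iff_of_true ⟨T, h.1 (mem_of_mem_erase hT), hTB⟩ ⟨T, hT, hTB⟩)
  have h_some : ∃ T ∈ A, Disjoint T B := by_contra fun h' ↦ h_iff (iff_of_false h' h_none)
  obtain ⟨T, hT, hTB⟩ := (h.2 B hB).1 h_some
  have hTS : T = S := by_contra fun hTS ↦ h_none ⟨T, mem_erase.2 ⟨hTS, hT⟩, hTB⟩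
  exact ⟨B, hB, hTS ▸ hTB, fun T hT hTS hTB ↦ h_none ⟨T, mem_erase.2 ⟨hTS, hT⟩, hTB⟩⟩

theorem exists_isSetPairSystem_of_minimal (h : Minimal (IsRepFamily n q · A) Ahat) :
    ∃ Bf : Finset (Fin n) → Finset (Fin n),
      (∀ S ∈ Ahat, #(Bf S) ≤ q) ∧ IsSetPairSystem Ahat id Bf := by
  have h_witness : ∀ S ∈ Ahat, ∃ B : Finset (Fin n),
      #B ≤ q ∧ Disjoint S B ∧ ∀ T ∈ Ahat, T ≠ S → ¬ Disjoint T B := fun S hS ↦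
    h.prop.exists_witness_of_not_erase fun h_erase ↦
      notMem_erase S Ahat (h.2 h_erase (erase_subset S Ahat) hS)
  choose! Bf hBf_card hBf_disjoint hBf_cross using h_witness
  exact ⟨Bf, hBf_card, hBf_disjoint, fun T hT S hS hTS ↦ hBf_cross S hS T hT hTS⟩

end IsRepFamily

theorem rep_family_exists (n p q : ℕ) (A : Finset (Finset (Fin n)))
    (hA : ∀ S ∈ A, S.card ≤ p) :
    ∃ Ahat : Finset (Finset (Fin n)),
      IsRepFamily n q Ahat A ∧ Ahat.card ≤ (p + q).choose p := by
  obtain ⟨Ahat, h_min⟩ := exists_minimal_of_wellFoundedLT (IsRepFamily n q · A) ⟨A, .refl A⟩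
  obtain ⟨Bf, hBf, h_system⟩ := IsRepFamily.exists_isSetPairSystem_of_minimal h_min
  exact ⟨Ahat, h_min.prop, h_system.card_le_choose (fun S hS ↦ hA S (h_min.prop.1 hS)) hBf⟩
end

section
/- Let G be a graph, v a vertex, and for each neighbour u of v let P̂_{u,ℓ−1} be a (k−ℓ+1)-representative family for P_{u,ℓ−1} (the family of vertex sets of (ℓ−1)-vertex paths ending at u). Then the family P'_{v,ℓ} = ⋃_{u ∈ N(v)} { {v} ∪ U : U ∈ P̂_{u,ℓ−1}, v ∉ U } is (k−ℓ)-representative for P_{v,ℓ}, the family of vertex sets of ℓ-vertex paths ending at v. -/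
/-!
An `ℓ`-path ending at `v` is exactly `v` appended to an `(ℓ - 1)`-path ending at a neighbour `u`
and avoiding `v`, so `P_{v,ℓ}` is obtained from the families `P_{u,ℓ-1}` by the operation
`U ↦ insert v U`. This operation turns `(q + 1)`-representative families into `q`-representative
ones: when `v ∉ U`, the set `{v} ∪ U` misses `B` iff `v ∉ B` and `U` misses `B ∪ {v}`, a set of
size at most `q + 1`.
-/

/-- The family of vertex sets of paths on `ℓ` vertices ending at `v` in `G`. -/
def PathFam {V : Type*} (G : SimpleGraph V) (v : V) (ℓ : ℕ) : Set (Set V) :=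
  {U | ∃ (u : V) (w : G.Walk u v), w.IsPath ∧ w.support.length = ℓ ∧
    U = {x | x ∈ w.support}}

/-- `F'` is a `q`-representative subfamily of `F`: for every vertex set `B` with
`|B| ≤ q`, `F` contains a member disjoint from `B` iff `F'` does. -/
def IsRep {V : Type*} (q : ℕ) (F' F : Set (Set V)) : Prop :=
  F' ⊆ F ∧ ∀ B : Finset V, B.card ≤ q →
    ((∃ A ∈ F, Disjoint A (↑B : Set V)) ↔ (∃ A ∈ F', Disjoint A (↑B : Set V)))

open SimpleGraph

section

variable {ι V : Type*}

def extendFam (v : V) (s : Set ι) (P : ι → Set (Set V)) : Set (Set V) :=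
  {S | ∃ u ∈ s, ∃ U ∈ P u, v ∉ U ∧ S = insert v U}

theorem extendFam_mono {v : V} {s : Set ι} {P Q : ι → Set (Set V)} (h : ∀ u ∈ s, P u ⊆ Q u) :
    extendFam v s P ⊆ extendFam v s Q := by
  rintro S ⟨u, hu, U, hU, hvU, rfl⟩
  exact ⟨u, hu, U, h u hu hU, hvU, rfl⟩

theorem IsRep.extendFam {q : ℕ} {v : V} {s : Set ι} {P Phat : ι → Set (Set V)}
    (hrep : ∀ u ∈ s, IsRep (q + 1) (Phat u) (P u)) :
    IsRep q (extendFam v s Phat) (extendFam v s P) := by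
  classical
  have hsub := extendFam_mono (v := v) fun u hu => (hrep u hu).1
  refine ⟨hsub, fun B hB => ⟨?_, fun ⟨A, hA, hd⟩ => ⟨A, hsub hA, hd⟩⟩⟩
  rintro ⟨_, ⟨u, hu, U, hU, hvU, rfl⟩, hd⟩
  rw [Set.disjoint_insert_left] at hd
  -- forbidding `v` as well uses up the extra unit of budget and forces `v ∉ U'`
  have hcard : (insert v B).card ≤ q + 1 := (Finset.card_insert_le v B).trans (by omega)
  obtain ⟨U', hU', hd'⟩ := ((hrep u hu).2 (insert v B) hcard).mp
    ⟨U, hU, by rw [Finset.coe_insert, Set.disjoint_insert_right]; exact ⟨hvU, hd.2⟩⟩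
  rw [Finset.coe_insert, Set.disjoint_insert_right] at hd'
  exact ⟨insert v U', ⟨u, hu, U', hU', hd'.1, rfl⟩, Set.disjoint_insert_left.mpr ⟨hd.1, hd'.2⟩⟩

theorem pathFam_succ_eq (G : SimpleGraph V) (v : V) {ℓ : ℕ} (hℓ : ℓ ≠ 0) :
    PathFam G v (ℓ + 1) = extendFam v (G.neighborSet v) (fun u => PathFam G u ℓ) := by
  ext S
  constructor
  · rintro ⟨u₀, w, hw, hlen, rfl⟩
    have hnil : ¬w.Nil := by
      rw [← Walk.length_eq_zero_iff]; rw [Walk.length_support] at hlen; omega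
    obtain ⟨u, hadj, p, rfl⟩ : ∃ u, ∃ (hadj : G.Adj u v) (p : G.Walk u₀ u), p.concat hadj = w :=
      ⟨_, _, _, w.concat_dropLast (w.adj_penultimate hnil)⟩
    rw [Walk.concat_isPath_iff] at hw
    refine ⟨u, hadj.symm, _, ⟨u₀, p, hw.1, by simpa using hlen, rfl⟩, hw.2, ?_⟩
    ext x
    simp [or_comm]
  · rintro ⟨u, hu, _, ⟨u₀, Q, hQ, hlen, rfl⟩, hv, rfl⟩
    refine ⟨u₀, Q.concat hu.symm, hQ.concat hv hu.symm, by simp [hlen], ?_⟩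
    ext x
    simp [or_comm]

end

theorem pathFam_representative_step_general {V : Type*} (G : SimpleGraph V)
    (v : V) (k ℓ : ℕ) (h2 : 2 ≤ ℓ) (Phat : V → Set (Set V))
    (hrep : ∀ u ∈ G.neighborSet v, IsRep (k - ℓ + 1) (Phat u) (PathFam G u (ℓ - 1))) :
    IsRep (k - ℓ)
      {S | ∃ u ∈ G.neighborSet v, ∃ U ∈ Phat u, v ∉ U ∧ S = insert v U}
      (PathFam G v ℓ) := by
  obtain ⟨m, rfl⟩ : ∃ m, ℓ = m + 1 := ⟨ℓ - 1, by omega⟩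
  rw [pathFam_succ_eq G v (by omega)]
  exact IsRep.extendFam hrep

theorem pathFam_representative_step {V : Type*} [Fintype V] (G : SimpleGraph V)
    (v : V) (k ℓ : ℕ) (h2 : 2 ≤ ℓ) (hk : ℓ ≤ k) (Phat : V → Set (Set V))
    (hrep : ∀ u ∈ G.neighborSet v, IsRep (k - ℓ + 1) (Phat u) (PathFam G u (ℓ - 1))) :
    IsRep (k - ℓ)
      {S | ∃ u ∈ G.neighborSet v, ∃ U ∈ Phat u, v ∉ U ∧ S = insert v U}
      (PathFam G v ℓ) :=
  pathFam_representative_step_general G v k ℓ h2 Phat hrep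
end
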